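/- Conditional Lindeberg condition for the compensated block-count martingales: fix an integer d ≥ 1 and let Δ⁽ⁿ⁾_h = (M⁽ⁿ⁾_{0,h} − M⁽ⁿ⁾_{0,h−1}, M⁽ⁿ⁾_{1,h} − M⁽ⁿ⁾_{1,h−1}, …, M⁽ⁿ⁾_{d,h} − M⁽ⁿ⁾_{d,h−1}) ∈ ℝ^{d+1} for h ∈ {2,…,n}. Then for every ε > 0, almost surely (1/n)·Σ_{h=2}^{n} E[‖Δ⁽ⁿ⁾_h‖²·1{‖Δ⁽ⁿ⁾_h‖² > n·ε} | 𝓕⁽ⁿ⁾_{h−1}] → 0 as n → ∞, where ‖·‖ is the Euclidean norm on ℝ^{d+1}. -/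

import Mathlib

open MeasureTheory ProbabilityTheory Filter Set Topology

noncomputable section

/-- At step `h`, the new element creates a new block: the number of blocks (index `0`)
and the number of singleton blocks (index `1`) increase by one, all other counts unchanged. -/
def IsNewBlock {Ω : Type*} (K : ℕ → ℕ → ℕ → Ω → ℤ) (n h : ℕ) (ω : Ω) : Prop :=
  K n 0 h ω = K n 0 (h - 1) ω + 1 ∧ K n 1 h ω = K n 1 (h - 1) ω + 1 ∧
    ∀ r, 2 ≤ r → K n r h ω = K n r (h - 1) ω

/-- At step `h`, a block of size `s` grows to size `s + 1`. -/
def IsGrowth {Ω : Type*} (K : ℕ → ℕ → ℕ → Ω → ℤ) (n s h : ℕ) (ω : Ω) : Prop :=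
  K n s h ω = K n s (h - 1) ω - 1 ∧ K n (s + 1) h ω = K n (s + 1) (h - 1) ω + 1 ∧
    ∀ r, r ≠ s → r ≠ s + 1 → K n r h ω = K n r (h - 1) ω

/-- The Chinese-restaurant array with parameters `(a, θ = lam * n)`:
`K n r h` is the number of blocks of size `r` (for `r ≥ 1`), resp. the total number of
blocks (for `r = 0`), of the Ewens–Pitman random partition of `{1, …, h}` with
parameters `(a, lam * n)`, built sequentially. -/
structure CRPArray (a lam : ℝ) (Ω : Type*) [MeasurableSpace Ω] where
  P : Measure Ω
  isProb : IsProbabilityMeasure P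
  K : ℕ → ℕ → ℕ → Ω → ℤ
  F : ℕ → ℕ → MeasurableSpace Ω
  F_eq : ∀ n h, F n h =
    ⨆ r : ℕ, ⨆ k ∈ Finset.Icc 1 h, MeasurableSpace.comap (K n r k) ⊤
  F_le : ∀ n h, F n h ≤ (inferInstance : MeasurableSpace Ω)
  K_zero : ∀ n r ω, K n r 0 ω = 0
  K_init_blocks : ∀ n ω, K n 0 1 ω = 1
  K_init_one : ∀ n ω, K n 1 1 ω = 1
  K_init_big : ∀ n r, 2 ≤ r → ∀ ω, K n r 1 ω = 0
  step : ∀ n, 1 ≤ n → ∀ h, 2 ≤ h → h ≤ n → ∀ᵐ ω ∂P,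
    IsNewBlock K n h ω ∨ ∃ s, 1 ≤ s ∧ s ≤ h - 1 ∧ IsGrowth K n s h ω
  condNew : ∀ n, 1 ≤ n → ∀ h, 2 ≤ h → h ≤ n →
    MeasureTheory.condExp (F n (h - 1)) P
        (Set.indicator {ω | IsNewBlock K n h ω} fun _ => (1 : ℝ))
      =ᵐ[P] fun ω => (a * (K n 0 (h - 1) ω : ℝ) + lam * n) / (lam * n + (h : ℝ) - 1)
  condGrowth : ∀ n, 1 ≤ n → ∀ h, 2 ≤ h → h ≤ n → ∀ s, 1 ≤ s → s ≤ h - 1 →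
    MeasureTheory.condExp (F n (h - 1)) P
        (Set.indicator {ω | IsGrowth K n s h ω} fun _ => (1 : ℝ))
      =ᵐ[P] fun ω => ((s : ℝ) - a) * (K n s (h - 1) ω : ℝ) / (lam * n + (h : ℝ) - 1)

/-- The limit function `m_r(x)`; `mFun a lam r 1` is the constant `𝔪_r`. -/
def mFun (a lam : ℝ) (r : ℕ) (x : ℝ) : ℝ :=
  if r = 0 then
    if a = 0 then lam * Real.log ((lam + x) / lam)
    else (lam / a) * (((lam + x) / lam) ^ a - 1)
  else ((∏ i ∈ Finset.range (r - 1), (1 - a + (i : ℝ))) / (r.factorial : ℝ)) *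
      x ^ r * lam ^ (1 - a) * (x + lam) ^ (a - (r : ℝ))

/-- `c_r = (1 - a)_{r↑} / r!`. -/
def cCoef (a : ℝ) (r : ℕ) : ℝ :=
  (∏ i ∈ Finset.range r, (1 - a + (i : ℝ))) / (r.factorial : ℝ)

/-- `a_r(x) = ((lam + x)/lam)^(r - a)`. -/
def aFun (a lam : ℝ) (r : ℕ) (x : ℝ) : ℝ := ((lam + x) / lam) ^ ((r : ℝ) - a)

/-- Limit one-step probabilities `p̄_r(x)`. -/
def pbar (a lam : ℝ) (r : ℕ) (x : ℝ) : ℝ :=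
  if r ≤ 1 then ((lam + x) / lam) ^ (a - 1)
  else cCoef a (r - 1) * lam ^ (1 - a) * x ^ (r - 1) * (x + lam) ^ (a - (r : ℝ))

/-- Limit one-step probabilities `q̄_r(x)`. -/
def qbar (a lam : ℝ) (r : ℕ) (x : ℝ) : ℝ :=
  if r = 0 then 0 else cCoef a r * lam ^ (1 - a) * x ^ r * (x + lam) ^ (a - (r : ℝ) - 1)

/-- `P̄_{i,j}(x)` for `1 ≤ i ≤ j`. -/
def Pbar (a lam : ℝ) (i j : ℕ) (x : ℝ) : ℝ :=
  if j = i ∨ (i = 1 ∧ j = 2) then pbar a lam (i - 1) x + qbar a lam (i - 1) x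
  else if j = i + 1 then -qbar a lam (i - 1) x
  else 0

/-- The symmetric family of functions `f_{i,j}(x)`. -/
def fEntry (a lam : ℝ) (i j : ℕ) (x : ℝ) : ℝ :=
  aFun a lam (min i j - 1) x * aFun a lam (max i j - 1) x *
    (Pbar a lam (min i j) (max i j) x -
      (pbar a lam (min i j - 1) x - qbar a lam (min i j - 1) x) *
        (pbar a lam (max i j - 1) x - qbar a lam (max i j - 1) x))

/-- The limiting covariance matrix entries `Σ_{i,j}`, `1 ≤ i, j ≤ d + 1`. -/
def SigmaMat (a lam : ℝ) (i j : ℕ) : ℝ :=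
  ((lam + 1) / lam) ^ ((i : ℝ) + (j : ℝ) - 2 - 2 * a) * ∫ x in (0:ℝ)..1, fEntry a lam i j x

/-- One-step conditional probability `p^{(n)}_{r, j}` of increasing `K n r`. -/
def pProc {Ω : Type*} (K : ℕ → ℕ → ℕ → Ω → ℤ) (a lam : ℝ) (n r j : ℕ) (ω : Ω) : ℝ :=
  if r ≤ 1 then (a * (K n 0 j ω : ℝ) + lam * n) / (lam * n + j)
  else ((r : ℝ) - 1 - a) * (K n (r - 1) j ω : ℝ) / (lam * n + j)

/-- One-step conditional probability `q^{(n)}_{r, j}` of decreasing `K n r`. -/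
def qProc {Ω : Type*} (K : ℕ → ℕ → ℕ → Ω → ℤ) (a lam : ℝ) (n r j : ℕ) (ω : Ω) : ℝ :=
  if r = 0 then 0 else ((r : ℝ) - a) * (K n r j ω : ℝ) / (lam * n + j)

/-- `a^{(n)}_{r,h} = ∏_{k=1}^{h-1} (lam n + k)/(lam n + k - r + a)`. -/
def aCoef (a lam : ℝ) (n r h : ℕ) : ℝ :=
  ∏ k ∈ Finset.range (h - 1),
    (lam * n + ((k : ℝ) + 1)) / (lam * n + ((k : ℝ) + 1) - (r : ℝ) + a)

/-- `β^{(n)}_{r,k}`. -/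
def betaProc {Ω : Type*} (K : ℕ → ℕ → ℕ → Ω → ℤ) (a lam : ℝ) (n r k : ℕ) (ω : Ω) : ℝ :=
  if r = 0 then lam * n / (lam * n + (k : ℝ)) else pProc K a lam n r k ω

/-- `A^{(n)}_{r,h} = Σ_{k=1}^{h-1} a^{(n)}_{r,k+1} β^{(n)}_{r,k}`. -/
def Acomp {Ω : Type*} (K : ℕ → ℕ → ℕ → Ω → ℤ) (a lam : ℝ) (n r h : ℕ) (ω : Ω) : ℝ :=
  ∑ k ∈ Finset.range (h - 1), aCoef a lam n r (k + 2) * betaProc K a lam n r (k + 1) ω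

/-- The compensated rescaled block counts `M^{(n)}_{r,h}`. -/
def Mart {Ω : Type*} (K : ℕ → ℕ → ℕ → Ω → ℤ) (a lam : ℝ) (n r h : ℕ) (ω : Ω) : ℝ :=
  aCoef a lam n r h * (K n r h ω : ℝ) - Acomp K a lam n r h ω



/-! ### Auxiliary lemmas for the Lindeberg condition -/

lemma CRP_step_diff_bound {Ω : Type*} (K : ℕ → ℕ → ℕ → Ω → ℤ) (n h : ℕ) (ω : Ω)
    (hstep : IsNewBlock K n h ω ∨ ∃ s, 1 ≤ s ∧ s ≤ h - 1 ∧ IsGrowth K n s h ω) :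
    ∀ r, |K n r h ω - K n r (h - 1) ω| ≤ 1 := by
  intro r
  rcases hstep with ⟨h0, h1, hr⟩ | ⟨s, _, _, hg0, hg1, hgr⟩
  · rcases r with _ | _ | r
    · rw [h0]; simp
    · rw [h1]; simp
    · rw [hr (r + 2) (by omega)]; simp
  · by_cases hrs : r = s
    · subst hrs; rw [hg0]; simp
    · by_cases hrs1 : r = s + 1
      · subst hrs1; rw [hg1]; simp
      · rw [hgr r hrs hrs1]; simp

lemma CRP_K_abs_le {Ω : Type*} (K : ℕ → ℕ → ℕ → Ω → ℤ) (n : ℕ) (ω : Ω)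
    (h1 : ∀ r, |K n r 1 ω| ≤ 1)
    (hstep : ∀ h, 2 ≤ h → h ≤ n → ∀ r, |K n r h ω - K n r (h - 1) ω| ≤ 1) :
    ∀ h, 1 ≤ h → h ≤ n → ∀ r, |K n r h ω| ≤ (h : ℤ) := by
  intro h
  induction h with
  | zero => omega
  | succ m ih =>
    intro _ hle r
    rcases Nat.lt_or_ge m 1 with hm | hm
    · interval_cases m
      exact (h1 r).trans (by norm_num)
    · have hs := hstep (m + 1) (by omega) hle r
      have h2 := ih (by omega) (by omega) r
      simp only [Nat.add_sub_cancel] at hs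
      have := abs_sub_abs_le_abs_sub (K n r (m + 1) ω) (K n r m ω)
      push_cast
      omega

lemma CRP_den_ge (a lam : ℝ) (ha0 : 0 ≤ a) (n i : ℕ) (d : ℕ) (hi : i ≤ d)
    (hn : 2 * (d : ℝ) + 2 ≤ lam * n) (x : ℝ) (hx : 0 ≤ x) :
    lam * n / 2 ≤ lam * n + (x + 1) - (i : ℝ) + a := by
  have : (i : ℝ) ≤ d := by exact_mod_cast hi
  nlinarith

lemma CRP_factor_le (a lam : ℝ) (ha0 : 0 ≤ a) (hlam : 0 < lam) (n i d : ℕ) (hi : i ≤ d)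
    (hn : 2 * (d : ℝ) + 2 ≤ lam * n) (x : ℝ) (hx : 0 ≤ x) :
    (lam * n + (x + 1)) / (lam * n + (x + 1) - (i : ℝ) + a)
      ≤ Real.exp (2 * d / (lam * n)) := by
  have hden := CRP_den_ge a lam ha0 n i d hi hn x hx
  have hln : (0 : ℝ) < lam * n := by nlinarith
  have hdpos : (0 : ℝ) < lam * n + (x + 1) - (i : ℝ) + a := by nlinarith
  have hid : (i : ℝ) ≤ d := by exact_mod_cast hi
  have h1 : (lam * n + (x + 1)) / (lam * n + (x + 1) - (i : ℝ) + a)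
      ≤ 1 + 2 * d / (lam * n) := by
    rw [div_le_iff₀ hdpos]
    have h2 : 2 * (d : ℝ) / (lam * n) * (lam * n + (x + 1) - (i : ℝ) + a)
        ≥ 2 * d / (lam * n) * (lam * n / 2) := by
      apply mul_le_mul_of_nonneg_left hden
      positivity
    have h3 : 2 * (d : ℝ) / (lam * n) * (lam * n / 2) = d := by
      field_simp
      exact mul_div_cancel_right₀ _ (by rintro h0; simp [h0] at hln)
    nlinarith
  exact h1.trans (by have := Real.add_one_le_exp (2 * (d : ℝ) / (lam * n)); linarith)

lemma CRP_aCoef_pos (a lam : ℝ) (ha0 : 0 ≤ a) (hlam : 0 < lam) (n i d h : ℕ) (hi : i ≤ d)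
    (hn : 2 * (d : ℝ) + 2 ≤ lam * n) : 0 < aCoef a lam n i h := by
  apply Finset.prod_pos
  intro k _
  have hden := CRP_den_ge a lam ha0 n i d hi hn k (Nat.cast_nonneg k)
  have hln : (0 : ℝ) < lam * n := by nlinarith
  apply div_pos (by positivity) (by nlinarith)

lemma CRP_aCoef_le (a lam : ℝ) (ha0 : 0 ≤ a) (hlam : 0 < lam) (n i d h : ℕ) (hi : i ≤ d)
    (hn : 2 * (d : ℝ) + 2 ≤ lam * n) (hh : h - 1 ≤ n) (hn1 : 1 ≤ n) :
    aCoef a lam n i h ≤ Real.exp (2 * d / lam) := by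
  have hln : (0 : ℝ) < lam * n := by nlinarith
  have key : aCoef a lam n i h ≤ Real.exp (2 * d / (lam * n)) ^ (h - 1) := by
    calc aCoef a lam n i h
        ≤ ∏ _k ∈ Finset.range (h - 1), Real.exp (2 * d / (lam * n)) := by
          apply Finset.prod_le_prod
          · intro k _
            have hden := CRP_den_ge a lam ha0 n i d hi hn k (Nat.cast_nonneg k)
            have hk : (0:ℝ) ≤ k := Nat.cast_nonneg k
            exact div_nonneg (by nlinarith) (by nlinarith)
          · intro k _
            exact CRP_factor_le a lam ha0 hlam n i d hi hn k (Nat.cast_nonneg k)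
      _ = Real.exp (2 * d / (lam * n)) ^ (h - 1) := by
          rw [Finset.prod_const, Finset.card_range]
  refine key.trans ?_
  rw [← Real.exp_nat_mul]
  apply Real.exp_le_exp.mpr
  have hnn : (0 : ℝ) < n := by exact_mod_cast hn1
  have hc : ((h - 1 : ℕ) : ℝ) ≤ n := by exact_mod_cast hh
  have hx : (0 : ℝ) ≤ 2 * d / (lam * n) := by positivity
  calc ((h - 1 : ℕ) : ℝ) * (2 * d / (lam * n)) ≤ (n : ℝ) * (2 * d / (lam * n)) :=
        mul_le_mul_of_nonneg_right hc hx
    _ = 2 * d / lam := by field_simp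

lemma CRP_aCoef_succ (a lam : ℝ) (n i m : ℕ) :
    aCoef a lam n i (m + 2) = aCoef a lam n i (m + 1) *
      ((lam * n + ((m : ℝ) + 1)) / (lam * n + ((m : ℝ) + 1) - (i : ℝ) + a)) := by
  simp only [aCoef, Nat.add_sub_cancel, show m + 2 - 1 = m + 1 from rfl]
  rw [Finset.prod_range_succ]

lemma CRP_Mart_diff_eq {Ω : Type*} (K : ℕ → ℕ → ℕ → Ω → ℤ) (a lam : ℝ) (n i m : ℕ) (ω : Ω) :
    Mart K a lam n i (m + 2) ω - Mart K a lam n i (m + 1) ω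
      = aCoef a lam n i (m + 2) * ((K n i (m + 2) ω : ℝ) - (K n i (m + 1) ω : ℝ))
        + (aCoef a lam n i (m + 2) - aCoef a lam n i (m + 1)) * (K n i (m + 1) ω : ℝ)
        - aCoef a lam n i (m + 2) * betaProc K a lam n i (m + 1) ω := by
  simp only [Mart, Acomp, show m + 2 - 1 = m + 1 from rfl, Nat.add_sub_cancel]
  rw [Finset.sum_range_succ]
  ring

lemma CRP_betaProc_abs_le {Ω : Type*} (K : ℕ → ℕ → ℕ → Ω → ℤ) (a lam : ℝ)
    (ha0 : 0 ≤ a) (ha1 : a < 1) (hlam : 0 < lam) (n i d j : ℕ) (hi : i ≤ d)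
    (hn1 : 1 ≤ n) (ω : Ω) (hK : ∀ r, |(K n r j ω : ℝ)| ≤ n) :
    |betaProc K a lam n i j ω| ≤ (1 + lam + d) / lam := by
  have hnn : (1 : ℝ) ≤ n := by exact_mod_cast hn1
  have hln : (0 : ℝ) < lam * n := by nlinarith
  have hjn : (0 : ℝ) ≤ j := Nat.cast_nonneg j
  have hden : lam * n ≤ lam * n + (j : ℝ) := by linarith
  have hdpos : (0 : ℝ) < lam * n + (j : ℝ) := by linarith
  have hgoal : (1 : ℝ) ≤ (1 + lam + d) / lam := by
    rw [le_div_iff₀ hlam]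
    have : (0:ℝ) ≤ d := Nat.cast_nonneg d
    nlinarith
  rcases Nat.eq_or_lt_of_le (Nat.zero_le i) with h0 | h1
  · rw [betaProc, if_pos h0.symm]
    rw [abs_of_nonneg (by positivity)]
    refine le_trans ?_ hgoal
    rw [div_le_one hdpos]; linarith
  · rcases Nat.lt_or_ge i 2 with h2 | h2
    · have hi1 : i = 1 := by omega
      subst hi1
      rw [betaProc, if_neg one_ne_zero, pProc, if_pos le_rfl]
      rw [abs_div, abs_of_pos hdpos]
      have hnum : |a * (K n 0 j ω : ℝ) + lam * n| ≤ (1 + lam) * n := by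
        have h3 := hK 0
        have h4 : |a * (K n 0 j ω : ℝ)| ≤ n := by
          rw [abs_mul, abs_of_nonneg ha0]
          calc a * |(K n 0 j ω : ℝ)| ≤ 1 * (n : ℝ) := by
                apply mul_le_mul (le_of_lt ha1) h3 (abs_nonneg _) zero_le_one
            _ = n := one_mul _
        calc |a * (K n 0 j ω : ℝ) + lam * n| ≤ |a * (K n 0 j ω : ℝ)| + |lam * n| :=
              abs_add_le _ _
          _ ≤ n + lam * n := by rw [abs_of_pos hln]; linarith
          _ = (1 + lam) * n := by ring
      calc |a * (K n 0 j ω : ℝ) + lam * n| / (lam * n + j)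
          ≤ ((1 + lam) * n) / (lam * n) := by
            apply div_le_div₀ (by positivity) hnum hln hden
        _ = (1 + lam) / lam := by field_simp
        _ ≤ (1 + lam + d) / lam := by
            have : (0:ℝ) ≤ d := Nat.cast_nonneg d
            exact div_le_div₀ (by linarith) (by linarith) hlam le_rfl
    · have hi2 : ¬ i ≤ 1 := by omega
      have hi0 : i ≠ 0 := by omega
      rw [betaProc, if_neg hi0, pProc, if_neg hi2]
      rw [abs_div, abs_of_pos hdpos, abs_mul]
      have hid : ((i : ℝ) - 1 - a) ≤ d := by
        have : (i:ℝ) ≤ d := by exact_mod_cast hi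
        linarith
      have hid0 : 0 ≤ (i : ℝ) - 1 - a := by
        have : (2:ℝ) ≤ i := by exact_mod_cast h2
        linarith
      have hnum : |(i : ℝ) - 1 - a| * |(K n (i-1) j ω : ℝ)| ≤ (d : ℝ) * n := by
        apply mul_le_mul (by rwa [abs_of_nonneg hid0]) (hK (i-1)) (abs_nonneg _)
          (Nat.cast_nonneg d)
      calc |(i : ℝ) - 1 - a| * |(K n (i-1) j ω : ℝ)| / (lam * n + j)
          ≤ ((d : ℝ) * n) / (lam * n) := by
            apply div_le_div₀ (by positivity) hnum hln hden
        _ = (d : ℝ) / lam := by field_simp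
        _ ≤ (1 + lam + d) / lam := by
            have : (0:ℝ) ≤ d := Nat.cast_nonneg d
            exact div_le_div₀ (by linarith) (by linarith) hlam le_rfl

lemma CRP_Mart_diff_abs_le {Ω : Type*} (K : ℕ → ℕ → ℕ → Ω → ℤ) (a lam : ℝ)
    (ha0 : 0 ≤ a) (ha1 : a < 1) (hlam : 0 < lam) (n d i m : ℕ) (hd : 1 ≤ d)
    (hi : i ≤ d) (hn1 : 1 ≤ n) (hn : 2 * (d : ℝ) + 2 ≤ lam * n) (hm : m + 2 ≤ n) (ω : Ω)
    (hdiff : |(K n i (m + 2) ω : ℝ) - (K n i (m + 1) ω : ℝ)| ≤ 1)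
    (hK : ∀ r, |(K n r (m + 1) ω : ℝ)| ≤ n) :
    |Mart K a lam n i (m + 2) ω - Mart K a lam n i (m + 1) ω|
      ≤ Real.exp (2 * d / lam) * (1 + 2 * d / lam + (1 + lam + d) / lam) := by
  set C1 := Real.exp (2 * (d : ℝ) / lam) with hC1
  have hln : (0 : ℝ) < lam * n := by nlinarith
  have hC1pos : 0 < C1 := Real.exp_pos _
  have ha2 : aCoef a lam n i (m + 2) ≤ C1 :=
    CRP_aCoef_le a lam ha0 hlam n i d (m + 2) hi hn (by omega) hn1
  have ha1' : aCoef a lam n i (m + 1) ≤ C1 :=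
    CRP_aCoef_le a lam ha0 hlam n i d (m + 1) hi hn (by omega) hn1
  have hp2 : 0 < aCoef a lam n i (m + 2) := CRP_aCoef_pos a lam ha0 hlam n i d _ hi hn
  have hp1 : 0 < aCoef a lam n i (m + 1) := CRP_aCoef_pos a lam ha0 hlam n i d _ hi hn
  have ht1 : |aCoef a lam n i (m + 2) * ((K n i (m + 2) ω : ℝ) - (K n i (m + 1) ω : ℝ))|
      ≤ C1 := by
    rw [abs_mul, abs_of_pos hp2]
    calc aCoef a lam n i (m + 2) * |(K n i (m + 2) ω : ℝ) - (K n i (m + 1) ω : ℝ)|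
        ≤ C1 * 1 := mul_le_mul ha2 hdiff (abs_nonneg _) (le_of_lt hC1pos)
      _ = C1 := mul_one _
  have hden := CRP_den_ge a lam ha0 n i d hi hn m (Nat.cast_nonneg m)
  have hdpos : (0 : ℝ) < lam * n + ((m : ℝ) + 1) - (i : ℝ) + a := by nlinarith
  have hid : (i : ℝ) ≤ d := by exact_mod_cast hi
  have hd1 : (1 : ℝ) ≤ d := by exact_mod_cast hd
  have hia : |(i : ℝ) - a| ≤ d := by
    rw [abs_le]
    constructor
    · have : (0 : ℝ) ≤ i := Nat.cast_nonneg i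
      linarith
    · linarith
  have heq : aCoef a lam n i (m + 2) - aCoef a lam n i (m + 1)
      = aCoef a lam n i (m + 1) *
        (((i : ℝ) - a) / (lam * n + ((m : ℝ) + 1) - (i : ℝ) + a)) := by
    rw [CRP_aCoef_succ]
    field_simp
    ring
  have ht2 : |(aCoef a lam n i (m + 2) - aCoef a lam n i (m + 1)) * (K n i (m + 1) ω : ℝ)|
      ≤ C1 * (2 * d / lam) := by
    rw [heq, abs_mul, abs_mul, abs_of_pos hp1, abs_div, abs_of_pos hdpos]
    have hb1 : |(i : ℝ) - a| / (lam * n + ((m : ℝ) + 1) - (i : ℝ) + a)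
        ≤ 2 * d / (lam * n) := by
      calc |(i : ℝ) - a| / (lam * n + ((m : ℝ) + 1) - (i : ℝ) + a)
          ≤ (d : ℝ) / (lam * n / 2) := div_le_div₀ (Nat.cast_nonneg d) hia (by linarith) hden
        _ = 2 * d / (lam * n) := by field_simp
    calc aCoef a lam n i (m + 1) * (|(i : ℝ) - a| /
            (lam * n + ((m : ℝ) + 1) - (i : ℝ) + a)) * |(K n i (m + 1) ω : ℝ)|
        ≤ C1 * (2 * d / (lam * n)) * (n : ℝ) := by
          apply mul_le_mul _ (hK i) (abs_nonneg _) (by positivity)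
          exact mul_le_mul ha1' hb1 (by positivity) (le_of_lt hC1pos)
      _ = C1 * (2 * d / lam) := by field_simp
  have ht3 : |aCoef a lam n i (m + 2) * betaProc K a lam n i (m + 1) ω|
      ≤ C1 * ((1 + lam + d) / lam) := by
    rw [abs_mul, abs_of_pos hp2]
    exact mul_le_mul ha2 (CRP_betaProc_abs_le K a lam ha0 ha1 hlam n i d (m + 1) hi hn1 ω hK)
      (abs_nonneg _) (le_of_lt hC1pos)
  rw [CRP_Mart_diff_eq]
  calc |aCoef a lam n i (m + 2) * ((K n i (m + 2) ω : ℝ) - (K n i (m + 1) ω : ℝ))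
        + (aCoef a lam n i (m + 2) - aCoef a lam n i (m + 1)) * (K n i (m + 1) ω : ℝ)
        - aCoef a lam n i (m + 2) * betaProc K a lam n i (m + 1) ω|
      ≤ |aCoef a lam n i (m + 2) * ((K n i (m + 2) ω : ℝ) - (K n i (m + 1) ω : ℝ))
        + (aCoef a lam n i (m + 2) - aCoef a lam n i (m + 1)) * (K n i (m + 1) ω : ℝ)|
        + |aCoef a lam n i (m + 2) * betaProc K a lam n i (m + 1) ω| := abs_sub _ _
    _ ≤ |aCoef a lam n i (m + 2) * ((K n i (m + 2) ω : ℝ) - (K n i (m + 1) ω : ℝ))|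
        + |(aCoef a lam n i (m + 2) - aCoef a lam n i (m + 1)) * (K n i (m + 1) ω : ℝ)|
        + |aCoef a lam n i (m + 2) * betaProc K a lam n i (m + 1) ω| := by
          have := abs_add_le (aCoef a lam n i (m + 2) * ((K n i (m + 2) ω : ℝ) - (K n i (m + 1) ω : ℝ)))
            ((aCoef a lam n i (m + 2) - aCoef a lam n i (m + 1)) * (K n i (m + 1) ω : ℝ))
          linarith
    _ ≤ C1 + C1 * (2 * d / lam) + C1 * ((1 + lam + d) / lam) := by linarith
    _ = Real.exp (2 * d / lam) * (1 + 2 * d / lam + (1 + lam + d) / lam) := by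
          rw [hC1]; ring


/-- conditional Lindeberg condition for the compensated block-count
martingales, with `‖Δ^{(n)}_h‖² = Σ_{i=0}^{d} (M^{(n)}_{i,h} − M^{(n)}_{i,h−1})²`
the squared Euclidean norm of the increment vector. -/
theorem ewensPitman_conditional_lindeberg
    (a lam : ℝ) (ha0 : 0 ≤ a) (ha1 : a < 1) (hlam : 0 < lam)
    {Ω : Type*} [MeasurableSpace Ω] (A : CRPArray a lam Ω)
    (d : ℕ) (hd : 1 ≤ d) (ε : ℝ) (hε : 0 < ε) :
    ∀ᵐ ω ∂A.P,
      Tendsto (fun n : ℕ =>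
          (∑ h ∈ Finset.Icc 2 n,
            (MeasureTheory.condExp (A.F n (h - 1)) A.P
              (Set.indicator
                {ω' | (n : ℝ) * ε < ∑ i ∈ Finset.range (d + 1),
                  (Mart A.K a lam n i h ω' - Mart A.K a lam n i (h - 1) ω') ^ 2}
                (fun ω' => ∑ i ∈ Finset.range (d + 1),
                  (Mart A.K a lam n i h ω' - Mart A.K a lam n i (h - 1) ω') ^ 2))) ω) /
            (n : ℝ))
        atTop (𝓝 0) := by
  set C4 := Real.exp (2 * (d : ℝ) / lam) * (1 + 2 * d / lam + (1 + lam + d) / lam) with hC4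
  set B := ((d : ℝ) + 1) * C4 ^ 2 with hB
  set N : ℕ := ⌈max (B / ε) ((2 * (d : ℝ) + 2) / lam)⌉₊ + 1 with hN
  have hN1 : 1 ≤ N := by omega
  have hNprop : ∀ n : ℕ, N ≤ n → 2 * (d : ℝ) + 2 ≤ lam * n ∧ B < n * ε ∧ 1 ≤ n := by
    intro n hn
    have hn1 : 1 ≤ n := le_trans hN1 hn
    have hcast : (N : ℝ) ≤ n := by exact_mod_cast hn
    have hceil : max (B / ε) ((2 * (d : ℝ) + 2) / lam)
        ≤ (⌈max (B / ε) ((2 * (d : ℝ) + 2) / lam)⌉₊ : ℝ) := Nat.le_ceil _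
    have hNR : max (B / ε) ((2 * (d : ℝ) + 2) / lam) + 1 ≤ (N : ℝ) := by
      rw [hN]; push_cast; linarith
    refine ⟨?_, ?_, hn1⟩
    · have h1 : (2 * (d : ℝ) + 2) / lam ≤ n :=
        le_trans (le_trans (le_max_right _ _) (by linarith)) hcast
      calc 2 * (d : ℝ) + 2 = ((2 * (d : ℝ) + 2) / lam) * lam := by field_simp
        _ ≤ (n : ℝ) * lam := mul_le_mul_of_nonneg_right h1 (le_of_lt hlam)
        _ = lam * n := mul_comm _ _
    · have h1 : B / ε < n :=
        lt_of_lt_of_le (lt_of_le_of_lt (le_max_left _ _) (by linarith)) hcast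
      calc B = (B / ε) * ε := by field_simp
        _ < (n : ℝ) * ε := mul_lt_mul_of_pos_right h1 hε
  have hmain : ∀ n : ℕ, N ≤ n → ∀ᵐ ω ∂A.P,
      ∑ h ∈ Finset.Icc 2 n,
        (MeasureTheory.condExp (A.F n (h - 1)) A.P
          (Set.indicator
            {ω' | (n : ℝ) * ε < ∑ i ∈ Finset.range (d + 1),
              (Mart A.K a lam n i h ω' - Mart A.K a lam n i (h - 1) ω') ^ 2}
            (fun ω' => ∑ i ∈ Finset.range (d + 1),
              (Mart A.K a lam n i h ω' - Mart A.K a lam n i (h - 1) ω') ^ 2))) ω = 0 := by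
    intro n hnN
    obtain ⟨hlamn, hBn, hn1⟩ := hNprop n hnN
    have hstepae : ∀ᵐ ω' ∂A.P, ∀ h, 2 ≤ h → h ≤ n →
        (IsNewBlock A.K n h ω' ∨ ∃ s, 1 ≤ s ∧ s ≤ h - 1 ∧ IsGrowth A.K n s h ω') := by
      rw [ae_all_iff]
      intro h
      by_cases hcond : 2 ≤ h ∧ h ≤ n
      · filter_upwards [A.step n hn1 h hcond.1 hcond.2] with ω' hω' _ _ using hω'
      · exact Filter.Eventually.of_forall fun ω' h2 hn' => absurd ⟨h2, hn'⟩ hcond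
    have hboundae : ∀ᵐ ω' ∂A.P, ∀ h ∈ Finset.Icc 2 n,
        ∑ i ∈ Finset.range (d + 1),
          (Mart A.K a lam n i h ω' - Mart A.K a lam n i (h - 1) ω') ^ 2 ≤ (n : ℝ) * ε := by
      filter_upwards [hstepae] with ω' hω'
      intro h hh
      rw [Finset.mem_Icc] at hh
      obtain ⟨m, rfl⟩ : ∃ m, h = m + 2 := ⟨h - 2, by omega⟩
      have hKZ : ∀ h', 1 ≤ h' → h' ≤ n → ∀ r, |A.K n r h' ω'| ≤ (h' : ℤ) := by
        apply CRP_K_abs_le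
        · intro r
          rcases r with _ | _ | r
          · rw [A.K_init_blocks]; norm_num
          · rw [A.K_init_one]; norm_num
          · rw [A.K_init_big n (r + 2) (by omega)]; norm_num
        · intro h' h2' hn' r
          exact CRP_step_diff_bound A.K n h' ω' (hω' h' h2' hn') r
      have hKR : ∀ r, |(A.K n r (m + 1) ω' : ℝ)| ≤ (n : ℝ) := by
        intro r
        have h1 := hKZ (m + 1) (by omega) (by omega) r
        have h2 : ((m : ℝ) + 1) ≤ n := by exact_mod_cast (show m + 1 ≤ n by omega)
        calc |(A.K n r (m + 1) ω' : ℝ)| = ((|A.K n r (m + 1) ω'| : ℤ) : ℝ) :=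
              Int.cast_abs.symm
          _ ≤ (((m : ℤ) + 1 : ℤ) : ℝ) := by exact_mod_cast h1
          _ ≤ (n : ℝ) := by push_cast; linarith
      have hsum : ∑ i ∈ Finset.range (d + 1),
          (Mart A.K a lam n i (m + 2) ω' - Mart A.K a lam n i (m + 2 - 1) ω') ^ 2
          ≤ ((d : ℝ) + 1) * C4 ^ 2 := by
        have hterm : ∀ i ∈ Finset.range (d + 1),
            (Mart A.K a lam n i (m + 2) ω' - Mart A.K a lam n i (m + 2 - 1) ω') ^ 2
              ≤ C4 ^ 2 := by
          intro i hi
          rw [Finset.mem_range] at hi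
          have hdiffR : |(A.K n i (m + 2) ω' : ℝ) - (A.K n i (m + 1) ω' : ℝ)| ≤ 1 := by
            have hz := CRP_step_diff_bound A.K n (m + 2) ω'
              (hω' (m + 2) (by omega) hh.2) i
            simp only [show m + 2 - 1 = m + 1 from rfl] at hz
            have : |((A.K n i (m + 2) ω' - A.K n i (m + 1) ω' : ℤ) : ℝ)| ≤ 1 := by
              rw [← Int.cast_abs]; exact_mod_cast hz
            push_cast at this
            exact this
          have hb := CRP_Mart_diff_abs_le A.K a lam ha0 ha1 hlam n d i m hd
            (by omega) hn1 hlamn hh.2 ω' hdiffR hKR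
          rw [show m + 2 - 1 = m + 1 from rfl]
          exact sq_le_sq' (abs_le.mp hb).1 (abs_le.mp hb).2
        calc ∑ i ∈ Finset.range (d + 1),
              (Mart A.K a lam n i (m + 2) ω' - Mart A.K a lam n i (m + 2 - 1) ω') ^ 2
            ≤ ∑ _i ∈ Finset.range (d + 1), C4 ^ 2 := Finset.sum_le_sum hterm
          _ = ((d : ℝ) + 1) * C4 ^ 2 := by
              rw [Finset.sum_const, Finset.card_range, nsmul_eq_mul]
              push_cast; ring
      refine hsum.trans ?_
      rw [← hB]
      exact le_of_lt hBn
    have hterm0 : ∀ h ∈ Finset.Icc 2 n,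
        (MeasureTheory.condExp (A.F n (h - 1)) A.P
          (Set.indicator
            {ω' | (n : ℝ) * ε < ∑ i ∈ Finset.range (d + 1),
              (Mart A.K a lam n i h ω' - Mart A.K a lam n i (h - 1) ω') ^ 2}
            (fun ω' => ∑ i ∈ Finset.range (d + 1),
              (Mart A.K a lam n i h ω' - Mart A.K a lam n i (h - 1) ω') ^ 2)))
          =ᵐ[A.P] (0 : Ω → ℝ) := by
      intro h hh
      have hind : (Set.indicator
          {ω' | (n : ℝ) * ε < ∑ i ∈ Finset.range (d + 1),
            (Mart A.K a lam n i h ω' - Mart A.K a lam n i (h - 1) ω') ^ 2}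
          (fun ω' => ∑ i ∈ Finset.range (d + 1),
            (Mart A.K a lam n i h ω' - Mart A.K a lam n i (h - 1) ω') ^ 2))
          =ᵐ[A.P] (0 : Ω → ℝ) := by
        filter_upwards [hboundae] with ω' hω'
        have hnot : ω' ∉ {ω' | (n : ℝ) * ε < ∑ i ∈ Finset.range (d + 1),
            (Mart A.K a lam n i h ω' - Mart A.K a lam n i (h - 1) ω') ^ 2} := by
          simp only [Set.mem_setOf_eq, not_lt]
          exact hω' h hh
        simp [Set.indicator_of_notMem hnot]
      have hc := condExp_congr_ae (m := A.F n (h - 1)) (μ := A.P) hind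
      rwa [condExp_zero] at hc
    have hall : ∀ᵐ ω ∂A.P, ∀ h, h ∈ Finset.Icc 2 n →
        (MeasureTheory.condExp (A.F n (h - 1)) A.P
          (Set.indicator
            {ω' | (n : ℝ) * ε < ∑ i ∈ Finset.range (d + 1),
              (Mart A.K a lam n i h ω' - Mart A.K a lam n i (h - 1) ω') ^ 2}
            (fun ω' => ∑ i ∈ Finset.range (d + 1),
              (Mart A.K a lam n i h ω' - Mart A.K a lam n i (h - 1) ω') ^ 2))) ω = 0 := by
      rw [ae_all_iff]
      intro h
      by_cases hh : h ∈ Finset.Icc 2 n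
      · filter_upwards [hterm0 h hh] with ω hω _ using hω
      · exact Filter.Eventually.of_forall fun ω h' => absurd h' hh
    filter_upwards [hall] with ω hω
    exact Finset.sum_eq_zero fun h hh => hω h hh
  have hfinal : ∀ᵐ ω ∂A.P, ∀ n : ℕ, N ≤ n →
      ∑ h ∈ Finset.Icc 2 n,
        (MeasureTheory.condExp (A.F n (h - 1)) A.P
          (Set.indicator
            {ω' | (n : ℝ) * ε < ∑ i ∈ Finset.range (d + 1),
              (Mart A.K a lam n i h ω' - Mart A.K a lam n i (h - 1) ω') ^ 2}
            (fun ω' => ∑ i ∈ Finset.range (d + 1),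
              (Mart A.K a lam n i h ω' - Mart A.K a lam n i (h - 1) ω') ^ 2))) ω = 0 := by
    rw [ae_all_iff]
    intro n
    by_cases hn : N ≤ n
    · filter_upwards [hmain n hn] with ω hω _ using hω
    · exact Filter.Eventually.of_forall fun ω h' => absurd h' hn
  filter_upwards [hfinal] with ω hω
  apply Filter.Tendsto.congr' _ tendsto_const_nhds
  filter_upwards [Filter.eventually_ge_atTop N] with n hn
  rw [hω n hn, zero_div]

end
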